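/- arXiv:1807.09436 — 2 statements merged into one kernel-verified Lean document; each statement's English description precedes it below -/
import Mathlib

section
/- Let r'_i : D → ℝ for i = 1,…,N and δ ∈ ℕ. There exists x ∈ D with #{i : r'_i(x) ≤ 0} ≥ δ if and only if there exist x ∈ D, y ∈ [0,1]^N, s ∈ ℝ^N with ∑ᵢ yᵢ ≥ δ, yᵢ·sᵢ = 0 for all i, sᵢ ≥ r'_i(x) for all i, and sᵢ ≥ 0 for all i. -/
lemma ite_nonpos_mul_max_zero_eq_zero (r : ℝ) :
    (if r ≤ 0 then (1 : ℝ) else 0) * max r 0 = 0 := by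
  split_ifs with h
  · simp [max_eq_right h]
  · simp

/-- Complementarity forces `y = 0` wherever the residual is positive, since then `s ≥ r > 0`. -/
lemma le_ite_nonpos_of_mul_eq_zero {y s r : ℝ} (hy : y ∈ Set.Icc 0 1) (hys : y * s = 0)
    (hrs : r ≤ s) : y ≤ if r ≤ 0 then 1 else 0 := by
  split_ifs with hr
  · exact hy.2
  · have hs : s ≠ 0 := by linarith [not_le.mp hr]
    exact ((mul_eq_zero.mp hys).resolve_right hs).le

theorem stmt_2_general {D : Type*} {N : ℕ} (r' : Fin N → D → ℝ) (δ : ℕ) :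
    (∃ x : D, δ ≤ (Finset.univ.filter fun i => r' i x ≤ 0).card) ↔
    (∃ (x : D) (y s : Fin N → ℝ),
      (δ : ℝ) ≤ ∑ i, y i ∧
      (∀ i, y i ∈ Set.Icc (0:ℝ) 1) ∧
      (∀ i, y i * s i = 0) ∧
      (∀ i, s i - r' i x ≥ 0) ∧
      (∀ i, s i ≥ 0)) := by
  constructor
  · rintro ⟨x, hx⟩
    refine ⟨x, fun i => if r' i x ≤ 0 then 1 else 0, fun i => max (r' i x) 0, ?_, fun i => ?_,
      fun i => ite_nonpos_mul_max_zero_eq_zero _, fun i => sub_nonneg.2 (le_max_left _ _),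
      fun i => le_max_right _ _⟩
    · rw [← Finset.natCast_card_filter]
      exact_mod_cast hx
    · dsimp only
      split_ifs <;> simp
  · rintro ⟨x, y, s, hsum, hy, hys, hsr, -⟩
    refine ⟨x, ?_⟩
    have hcard : (δ : ℝ) ≤ (Finset.univ.filter fun i => r' i x ≤ 0).card := by
      rw [Finset.natCast_card_filter]
      exact hsum.trans <| Finset.sum_le_sum fun i _ =>
        le_ite_nonpos_of_mul_eq_zero (hy i) (hys i) (sub_nonneg.mp (hsr i))
    exact_mod_cast hcard

/-- Lemma 1: equivalence of the update problem and its
complementarity-constraint reformulation. -/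
theorem stmt_2 {D : Type*} {N : ℕ} (r' : Fin N → D → ℝ) (δ : ℕ) (hδ : δ ≤ N) :
    (∃ x : D, δ ≤ (Finset.univ.filter fun i => r' i x ≤ 0).card) ↔
    (∃ (x : D) (y s : Fin N → ℝ),
      (δ : ℝ) ≤ ∑ i, y i ∧
      (∀ i, y i ∈ Set.Icc (0:ℝ) 1) ∧
      (∀ i, y i * s i = 0) ∧
      (∀ i, s i - r' i x ≥ 0) ∧
      (∀ i, s i ≥ 0)) :=
  stmt_2_general r' δ
end

section
/- Consider minimizing ∑ᵢ yᵢsᵢ over x ∈ D, s ∈ ℝ^N, y ∈ ℝ^N subject to ∑ᵢ yᵢ ≥ δ, yᵢ ∈ [0,1], sᵢ ≥ r'_i(x), sᵢ ≥ 0 for all i. The objective is bounded below by 0 on the feasible set, and if a global minimizer (x*, s*, y*) attains objective value 0, then #{i : r'_i(x*) ≤ 0} ≥ δ. -/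
/-! A feasible point has `yᵢ ≥ 0` and `sᵢ ≥ 0`, so every term `yᵢ sᵢ` is nonnegative. If the
sum vanishes, every term does; whenever `r'ᵢ(x) > 0` we have `sᵢ ≥ r'ᵢ(x) > 0`, forcing `yᵢ = 0`.
Hence the weights `yᵢ ≤ 1` are supported on `{i | r'ᵢ(x) ≤ 0}`, and `δ ≤ ∑ yᵢ` is at most the
size of that set. -/

lemma Finset.sum_le_card_filter_of_le_one {ι : Type*} (t : Finset ι) (p : ι → Prop)
    [DecidablePred p] {y : ι → ℝ} (hy : ∀ i ∈ t, y i ≤ 1) (hsupp : ∀ i ∈ t, ¬ p i → y i = 0) :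
    ∑ i ∈ t, y i ≤ (t.filter p).card := by
  rw [← Finset.sum_filter_of_ne fun i hi hyi => by_contra fun hp => hyi (hsupp i hi hp)]
  simpa using Finset.sum_le_card_nsmul _ _ 1 fun i hi => hy i (Finset.mem_filter.mp hi).1

theorem stmt_4_general {D : Type*} {N : ℕ} (r' : Fin N → D → ℝ) (δ : ℕ)
    (Feas : D → (Fin N → ℝ) → (Fin N → ℝ) → Prop)
    (hFeas : ∀ x s y, Feas x s y ↔
      ((δ : ℝ) ≤ ∑ i, y i ∧ (∀ i, y i ∈ Set.Icc (0:ℝ) 1) ∧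
       (∀ i, s i - r' i x ≥ 0) ∧ (∀ i, s i ≥ 0)))
    (xs : D) (ss ys : Fin N → ℝ)
    (hfeas : Feas xs ss ys) :
    (∀ x s y, Feas x s y → (0:ℝ) ≤ ∑ i, y i * s i) ∧
    (∑ i, ys i * ss i = 0 → δ ≤ (Finset.univ.filter fun i => r' i xs ≤ 0).card) := by
  refine ⟨fun x s y hf => ?_, fun hzero => ?_⟩
  · obtain ⟨-, hy, -, hs⟩ := (hFeas x s y).mp hf
    exact Finset.sum_nonneg fun i _ => mul_nonneg (hy i).1 (hs i)
  · obtain ⟨hsum, hy, hr, hs⟩ := (hFeas xs ss ys).mp hfeas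
    have hterm : ∀ i ∈ Finset.univ, ys i * ss i = 0 :=
      (Finset.sum_eq_zero_iff_of_nonneg fun i _ => mul_nonneg (hy i).1 (hs i)).mp hzero
    have hsupp : ∀ i ∈ Finset.univ, ¬ r' i xs ≤ 0 → ys i = 0 := fun i hi hri =>
      have hss : 0 < ss i := (not_le.mp hri).trans_le (sub_nonneg.mp (hr i))
      (mul_eq_zero.mp (hterm i hi)).resolve_right hss.ne'
    exact_mod_cast hsum.trans
      (Finset.sum_le_card_filter_of_le_one _ _ (fun i _ => (hy i).2) hsupp)

/-- Lemma 2: the objective ∑ᵢ yᵢsᵢ of the continuous program is bounded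
below by 0 on the feasible set, and if a global minimizer attains value 0 then the
consensus of x* is at least δ. -/
theorem stmt_4 {D : Type*} {N : ℕ} (r' : Fin N → D → ℝ) (δ : ℕ) (hδ : δ ≤ N)
    (Feas : D → (Fin N → ℝ) → (Fin N → ℝ) → Prop)
    (hFeas : ∀ x s y, Feas x s y ↔
      ((δ : ℝ) ≤ ∑ i, y i ∧ (∀ i, y i ∈ Set.Icc (0:ℝ) 1) ∧
       (∀ i, s i - r' i x ≥ 0) ∧ (∀ i, s i ≥ 0)))
    (xs : D) (ss ys : Fin N → ℝ)
    (hfeas : Feas xs ss ys)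
    (hmin : ∀ x s y, Feas x s y → ∑ i, ys i * ss i ≤ ∑ i, y i * s i) :
    (∀ x s y, Feas x s y → (0:ℝ) ≤ ∑ i, y i * s i) ∧
    (∑ i, ys i * ss i = 0 → δ ≤ (Finset.univ.filter fun i => r' i xs ≤ 0).card) :=
  stmt_4_general r' δ Feas hFeas xs ss ys hfeas
end
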